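/- arXiv:2006.11362 — 3 statements merged into one kernel-verified Lean document; each statement's English description precedes it below -/
import Mathlib

section
/- Under Mallows' model with a single sample (n=1), for any alternative a and any 0<α<1: if there exists a level-α UMP test for H₀ = ℒ(𝒜)∖L_{a≻others} vs H₁ = L_{a≻others}, then there exist K ∈ ℝ and Γ ∈ [0,1] such that the Borda-score threshold test f̄ defined by f̄(V)=1 if Borda_a(V)>K, f̄(V)=0 if Borda_a(V)<K, and f̄(V)=Γ if Borda_a(V)=K has Size(f̄) ≤ α over H₀ and is a level-α UMP test for H₀ vs H₁. -/
/-!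
Relabelling the alternatives other than `a` preserves Mallows' model and both hypotheses, so the
power of a UMP test is invariant under it, and averaging the test over these relabellings gives a
test of the same size bound and power that depends only on the position of `a`. Let `w_W(k)` be
the Mallows weight of the rankings that put `a` in position `k` under ground truth `W`. Moving `a`
down by one position changes the Kendall-tau distance by one, so `w_W(k) = φ^k w_W(0)` when `W`
ranks `a` first, while for every `W` the ratio `w_W(k) / φ^k` is nondecreasing in `k`. By a
Neyman–Pearson exchange, among position tests of the same power the test that rejects exactly
when `a` is near the top has the smallest size under every `W`. Since `Borda_a(V)` is
`m - 1 - V a`, those tests are the Borda threshold tests.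
-/

namespace Voting

open Finset

section Generic

variable {S Θ : Type*} [Fintype S] [Fintype Θ]

/-- `Size π f θ` : the probability that test `f` rejects when the ground truth is `θ`. -/
noncomputable def Size (π : Θ → S → ℝ) (f : S → ℝ) (θ : Θ) : ℝ :=
  ∑ P, π θ P * f P

/-- `Power π f θ` : the power of test `f` at parameter `θ`. -/
noncomputable def Power (π : Θ → S → ℝ) (f : S → ℝ) (θ : Θ) : ℝ :=
  ∑ P, π θ P * f P

/-- A (randomized) test is a critical function with values in `[0,1]`. -/
def IsTest (f : S → ℝ) : Prop := ∀ P, 0 ≤ f P ∧ f P ≤ 1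

/-- `Size(f) ≤ α` over the null hypothesis `H0`. -/
def SizeLe (π : Θ → S → ℝ) (H0 : Set Θ) (f : S → ℝ) (α : ℝ) : Prop :=
  ∀ h0 ∈ H0, Size π f h0 ≤ α

/-- `Size(f) = α` over the null hypothesis `H0` (the max over `H0` equals `α`). -/
def SizeEq (π : Θ → S → ℝ) (H0 : Set Θ) (f : S → ℝ) (α : ℝ) : Prop :=
  SizeLe π H0 f α ∧ ∃ h0 ∈ H0, Size π f h0 = α

/-- `f` is a level-`α` most powerful test for `H0` vs the simple alternative `h1`. -/
def IsMostPowerful (π : Θ → S → ℝ) (H0 : Set Θ) (h1 : Θ) (α : ℝ) (f : S → ℝ) : Prop :=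
  IsTest f ∧ SizeLe π H0 f α ∧
    ∀ g : S → ℝ, IsTest g → SizeLe π H0 g α → Power π g h1 ≤ Power π f h1

/-- `f` is a level-`α` uniformly most powerful test for `H0` vs `H1`. -/
def IsUMP (π : Θ → S → ℝ) (H0 H1 : Set Θ) (α : ℝ) (f : S → ℝ) : Prop :=
  ∀ h1 ∈ H1, IsMostPowerful π H0 h1 α f

end Generic

/-- A ranking over `m` alternatives: `V a` is the position of alternative `a`
(smaller position = more preferred), i.e. `a ≻_V b ↔ V a < V b`. -/
abbrev Ranking (m : ℕ) := Equiv.Perm (Fin m)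

/-- Kendall-tau distance: the number of (unordered) pairs on which `V` and `W` disagree. -/
def KT {m : ℕ} (V W : Ranking m) : ℕ :=
  (Finset.univ.filter (fun p : Fin m × Fin m => V p.1 < V p.2 ∧ W p.2 < W p.1)).card

/-- Mallows' single-sample probability of `V` given ground truth `W` and dispersion `φ`. -/
noncomputable def mallows1 {m : ℕ} (φ : ℝ) (W V : Ranking m) : ℝ :=
  φ ^ KT V W / ∑ U : Ranking m, φ ^ KT U W

/-- Mallows' model with `n` i.i.d. samples. -/
noncomputable def mallows {m : ℕ} (φ : ℝ) (n : ℕ) :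
    Ranking m → (Fin n → Ranking m) → ℝ :=
  fun W P => ∏ i, mallows1 φ W (P i)

/-- `L_{a≻others}` : rankings in which `a` is ranked at the top. -/
def Ltop {m : ℕ} (a : Fin m) : Set (Ranking m) := {V | ∀ b, b ≠ a → V a < V b}

/-- `L_{others≻a}` : rankings in which `a` is ranked at the bottom. -/
def Lbot {m : ℕ} (a : Fin m) : Set (Ranking m) := {V | ∀ b, b ≠ a → V b < V a}

/-- `w_P(b≻a)` : the weighted-majority-graph weight on the edge `b → a` of profile `P`. -/
def wpair {m n : ℕ} (P : Fin n → Ranking m) (b a : Fin m) : ℤ :=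
  ((Finset.univ.filter (fun i => P i b < P i a)).card : ℤ) -
    ((Finset.univ.filter (fun i => P i a < P i b)).card : ℤ)

/-- `w_P(B≻a) = Σ_{b∈B} w_P(b≻a)`. -/
def wset {m n : ℕ} (P : Fin n → Ranking m) (B : Finset (Fin m)) (a : Fin m) : ℤ :=
  ∑ b ∈ B, wpair P b a

/-- The threshold test on the statistic `w_P(B≻a)` with threshold `K`/randomization `Γ`. -/
noncomputable def wTest {m : ℕ} (n : ℕ) (B : Finset (Fin m)) (a : Fin m) (K Γ : ℝ) :
    (Fin n → Ranking m) → ℝ :=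
  fun P =>
    if K < ((wset P B a : ℤ) : ℝ) then 1
    else if ((wset P B a : ℤ) : ℝ) < K then 0
    else Γ

/-- The Borda score of `a` in `V`: the number of alternatives ranked below `a`. -/
def Borda {m : ℕ} (a : Fin m) (V : Ranking m) : ℕ :=
  (Finset.univ.filter (fun b => V a < V b)).card


/-- The Borda-score threshold test. -/
noncomputable def bordaTest {m : ℕ} (a : Fin m) (K Γ : ℝ) : Ranking m → ℝ :=
  fun V =>
    if K < (Borda a V : ℝ) then 1
    else if (Borda a V : ℝ) < K then 0
    else Γ

section Invariance

variable {S Θ G : Type*} [Group G] [MulAction G S]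

variable (G) in
noncomputable def symmetrize [Fintype G] (f : S → ℝ) (x : S) : ℝ :=
  (∑ g : G, f (g • x)) / Fintype.card G

theorem symmetrize_smul [Fintype G] (f : S → ℝ) (g : G) (x : S) :
    symmetrize G f (g • x) = symmetrize G f x := by
  unfold symmetrize
  congr 1
  exact Fintype.sum_equiv (Equiv.mulRight g) _ _ fun h => by simp [mul_smul]

theorem IsTest.symmetrize [Fintype G] {f : S → ℝ} (hf : IsTest f) :
    IsTest (symmetrize G f) := by
  intro x
  have hcard : (0 : ℝ) < Fintype.card G := by exact_mod_cast Fintype.card_pos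
  refine ⟨div_nonneg (sum_nonneg fun g _ => (hf _).1) hcard.le, (div_le_one hcard).2 ?_⟩
  calc ∑ g : G, f (g • x) ≤ ∑ _g : G, (1 : ℝ) := sum_le_sum fun g _ => (hf _).2
    _ = Fintype.card G := by simp

variable [Fintype S] [MulAction G Θ] {π : Θ → S → ℝ}

theorem size_comp_smul (hπ : ∀ (g : G) θ x, π (g • θ) (g • x) = π θ x) (f : S → ℝ) (g : G)
    (θ : Θ) : Size π (fun x => f (g • x)) θ = Size π f (g • θ) :=
  Fintype.sum_equiv (MulAction.toPerm g) _ _ fun x => by simp [hπ]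

theorem IsUMP.power_smul (hπ : ∀ (g : G) θ x, π (g • θ) (g • x) = π θ x) {H0 H1 : Set Θ}
    (hH0 : ∀ (g : G) θ, g • θ ∈ H0 ↔ θ ∈ H0) (hH1 : ∀ (g : G) θ, g • θ ∈ H1 ↔ θ ∈ H1)
    {α : ℝ} {f : S → ℝ} (hf : IsUMP π H0 H1 α f) {h1 : Θ} (hh1 : h1 ∈ H1) (g : G) :
    Power π f (g • h1) = Power π f h1 := by
  have key : ∀ (g : G) h1, h1 ∈ H1 → Power π f (g • h1) ≤ Power π f h1 := by
    intro g h1 hh1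
    obtain ⟨hftest, hfsize, hfmax⟩ := hf h1 hh1
    have hsize : SizeLe π H0 (fun x => f (g • x)) α := fun h0 hh0 =>
      (size_comp_smul hπ f g h0).trans_le (hfsize _ ((hH0 g h0).2 hh0))
    exact (size_comp_smul hπ f g h1).symm.trans_le (hfmax _ (fun x => hftest _) hsize)
  refine le_antisymm (key g h1 hh1) ?_
  simpa using key g⁻¹ (g • h1) ((hH1 g h1).2 hh1)

variable [Fintype G]

theorem size_symmetrize (hπ : ∀ (g : G) θ x, π (g • θ) (g • x) = π θ x) (f : S → ℝ) (θ : Θ) :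
    Size π (symmetrize G f) θ = (∑ g : G, Size π f (g • θ)) / Fintype.card G := by
  simp only [← size_comp_smul hπ f]
  simp only [Size, symmetrize, mul_div_assoc', mul_sum, ← sum_div]
  rw [sum_comm]

theorem SizeLe.symmetrize (hπ : ∀ (g : G) θ x, π (g • θ) (g • x) = π θ x) {H0 : Set Θ}
    (hH0 : ∀ (g : G) θ, g • θ ∈ H0 ↔ θ ∈ H0) {f : S → ℝ} {α : ℝ} (hf : SizeLe π H0 f α) :
    SizeLe π H0 (symmetrize G f) α := by
  intro h0 hh0
  have hcard : (0 : ℝ) < Fintype.card G := by exact_mod_cast Fintype.card_pos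
  rw [size_symmetrize hπ, div_le_iff₀ hcard]
  calc ∑ g : G, Size π f (g • h0) ≤ ∑ _g : G, α :=
        sum_le_sum fun g _ => hf _ ((hH0 g h0).2 hh0)
    _ = α * Fintype.card G := by simp [mul_comm]

theorem power_symmetrize (hπ : ∀ (g : G) θ x, π (g • θ) (g • x) = π θ x) {f : S → ℝ} {θ : Θ}
    (hf : ∀ g : G, Power π f (g • θ) = Power π f θ) :
    Power π (symmetrize G f) θ = Power π f θ := by
  have hcard : (Fintype.card G : ℝ) ≠ 0 := by exact_mod_cast Fintype.card_ne_zero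
  change Size π (symmetrize G f) θ = _
  rw [size_symmetrize hπ]
  change (∑ g : G, Power π f (g • θ)) / _ = _
  simp [hf, hcard]

end Invariance

def threshold (p₀ : ℕ) (Γ : ℝ) (k : ℕ) : ℝ :=
  if k < p₀ then 1 else if k = p₀ then Γ else 0

section Threshold

variable {p₀ k : ℕ} {Γ : ℝ}

theorem threshold_of_lt (h : k < p₀) : threshold p₀ Γ k = 1 := if_pos h

theorem threshold_self : threshold p₀ Γ p₀ = Γ := by simp [threshold]

theorem threshold_of_gt (h : p₀ < k) : threshold p₀ Γ k = 0 := by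
  simp [threshold, h.ne', h.not_gt]

theorem exists_sum_mul_threshold_eq {p : ℕ → ℝ} (hp : ∀ k, 0 < p k) {n : ℕ} (hn : 0 < n)
    {c : ℝ} (hc0 : 0 ≤ c) (hc : c ≤ ∑ k ∈ range n, p k) :
    ∃ p₀ < n, ∃ Γ : ℝ, 0 ≤ Γ ∧ Γ ≤ 1 ∧ ∑ k ∈ range n, p k * threshold p₀ Γ k = c := by
  induction n with
  | zero => exact absurd hn (lt_irrefl 0)
  | succ n ih =>
    by_cases h : 0 < n ∧ c ≤ ∑ k ∈ range n, p k
    · obtain ⟨p₀, hp₀, Γ, hΓ0, hΓ1, hsum⟩ := ih h.1 h.2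
      refine ⟨p₀, hp₀.trans (lt_add_one n), Γ, hΓ0, hΓ1, ?_⟩
      rw [sum_range_succ, hsum, threshold_of_gt hp₀, mul_zero, add_zero]
    · have hlow : ∑ k ∈ range n, p k ≤ c := by
        rcases Nat.eq_zero_or_pos n with rfl | hn
        · simpa using hc0
        · exact le_of_not_ge fun h' => h ⟨hn, h'⟩
      rw [sum_range_succ] at hc
      refine ⟨n, lt_add_one n, (c - ∑ k ∈ range n, p k) / p n,
        div_nonneg (by linarith) (hp n).le, (div_le_one (hp n)).2 (by linarith), ?_⟩
      rw [sum_range_succ, threshold_self, mul_div_cancel₀ _ (hp n).ne',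
        sum_congr rfl fun k hk => by rw [threshold_of_lt (mem_range.1 hk), mul_one]]
      ring

/-- Neyman–Pearson exchange for the monotone likelihood ratio `q / p`. -/
theorem sum_mul_threshold_le {n : ℕ} {p q g : ℕ → ℝ}
    (hpq : ∀ k l, k ≤ l → l < n → p l * q k ≤ p k * q l) (hp₀ : p₀ < n) (hp : 0 < p p₀)
    (hg : ∀ k, 0 ≤ g k ∧ g k ≤ 1)
    (hsum : ∑ k ∈ range n, p k * threshold p₀ Γ k = ∑ k ∈ range n, p k * g k) :
    ∑ k ∈ range n, q k * threshold p₀ Γ k ≤ ∑ k ∈ range n, q k * g k := by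
  have hpt : ∀ k ∈ range n, p p₀ * (q k * (threshold p₀ Γ k - g k))
      ≤ q p₀ * (p k * (threshold p₀ Γ k - g k)) := by
    intro k hk
    rcases lt_trichotomy k p₀ with hlt | rfl | hgt
    · rw [threshold_of_lt hlt]
      nlinarith [mul_le_mul_of_nonneg_right (hpq k p₀ hlt.le hp₀) (sub_nonneg.2 (hg k).2)]
    · exact le_of_eq (by ring)
    · rw [threshold_of_gt hgt]
      nlinarith [mul_le_mul_of_nonneg_right (hpq p₀ k hgt.le (mem_range.1 hk)) (hg k).1]
  have hzero : ∑ k ∈ range n, p k * (threshold p₀ Γ k - g k) = 0 := by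
    simp only [mul_sub, sum_sub_distrib, hsum, sub_self]
  have := sum_le_sum hpt
  rw [← mul_sum, ← mul_sum, hzero, mul_zero] at this
  have := nonpos_of_mul_nonpos_right this hp
  simp only [mul_sub, sum_sub_distrib] at this
  linarith

end Threshold

section Mallows

variable {m : ℕ}

theorem KT_mul_right (V W τ : Ranking m) : KT (V * τ) (W * τ) = KT V W :=
  card_equiv (τ.prodCongr τ) fun p => by rw [mem_filter, mem_filter]; simp

theorem sum_pow_KT_mul_right (φ : ℝ) (W τ : Ranking m) :
    ∑ U : Ranking m, φ ^ KT U (W * τ) = ∑ U : Ranking m, φ ^ KT U W :=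
  Fintype.sum_equiv (Equiv.mulRight τ⁻¹) _ _ fun U => by
    simpa using congrArg (φ ^ ·) (KT_mul_right (U * τ⁻¹) W τ)

theorem mallows1_mul_right (φ : ℝ) (W V τ : Ranking m) :
    mallows1 φ (W * τ) (V * τ) = mallows1 φ W V := by
  rw [mallows1, mallows1, KT_mul_right, sum_pow_KT_mul_right]

theorem mem_Ltop_iff {a : Fin m} {W : Ranking m} : W ∈ Ltop a ↔ (W a : ℕ) = 0 := by
  constructor
  · intro h
    by_contra h0
    have hb : W (W⁻¹ ⟨0, a.pos⟩) = ⟨0, a.pos⟩ := W.apply_symm_apply _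
    have hne : W⁻¹ ⟨0, a.pos⟩ ≠ a := fun e => h0 (by rw [← e, hb])
    have := h _ hne
    rw [hb] at this
    exact absurd (Fin.lt_def.1 this) (Nat.not_lt_zero _)
  · intro h b hb
    have : (W b : ℕ) ≠ W a := fun e => hb (W.injective (Fin.ext e))
    exact Fin.lt_def.2 (by omega)

theorem swap_mem_Ltop (a : Fin m) : Equiv.swap a ⟨0, a.pos⟩ ∈ Ltop a := by
  simp [mem_Ltop_iff]

theorem mul_mem_Ltop_iff {a : Fin m} {τ : Ranking m} (hτ : τ a = a) {W : Ranking m} :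
    W * τ ∈ Ltop a ↔ W ∈ Ltop a := by
  simp [mem_Ltop_iff, hτ]

theorem swap_apply_lt_swap_apply_iff {i j u v : Fin m} (hij : (i : ℕ) + 1 = j)
    (hi : ¬(u = i ∧ v = j)) (hj : ¬(u = j ∧ v = i)) :
    Equiv.swap i j u < Equiv.swap i j v ↔ u < v := by
  rw [Equiv.swap_apply_def, Equiv.swap_apply_def]
  split_ifs <;> simp only [Fin.lt_def, ← Fin.val_eq_val, not_and] at * <;> omega

/-- Exchanging the alternatives in the adjacent positions `i` and `j` changes the Kendall-tau
distance only on that pair. -/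
theorem KT_swap_mul (V W : Ranking m) {i j : Fin m} (hij : (i : ℕ) + 1 = j) :
    (KT (Equiv.swap i j * V) W : ℤ) = KT V W + if W (V⁻¹ i) < W (V⁻¹ j) then 1 else -1 := by
  set x := V⁻¹ i
  set y := V⁻¹ j
  have hx : V x = i := V.apply_symm_apply i
  have hy : V y = j := V.apply_symm_apply j
  have hij' : i < j := Fin.lt_def.2 (by omega)
  have hxy : x ≠ y := fun h => hij'.ne (by rw [← hx, ← hy, h])
  have hWxy : W x ≠ W y := fun h => hxy (W.injective h)
  rw [← sub_eq_iff_eq_add']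
  simp only [KT, card_filter, Nat.cast_sum, Nat.cast_ite, Nat.cast_one, Nat.cast_zero,
    ← sum_sub_distrib]
  rw [Fintype.sum_eq_add (x, y) (y, x) (by simp [hxy]) ?_]
  · simp only [Equiv.Perm.mul_apply, hx, hy, Equiv.swap_apply_left, Equiv.swap_apply_right,
      hij', hij'.not_gt, true_and, false_and, if_false]
    split_ifs with hyx hxy' hxy'
    · exact absurd hxy' (lt_asymm hyx)
    · norm_num
    · norm_num
    · exact absurd (lt_of_le_of_ne (not_lt.1 hyx) hWxy) hxy'
  · rintro ⟨u, v⟩ ⟨hne1, hne2⟩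
    have hi : ¬(V u = i ∧ V v = j) := fun ⟨hu, hv⟩ =>
      hne1 (Prod.ext (V.injective (hu.trans hx.symm)) (V.injective (hv.trans hy.symm)))
    have hj : ¬(V u = j ∧ V v = i) := fun ⟨hu, hv⟩ =>
      hne2 (Prod.ext (V.injective (hu.trans hy.symm)) (V.injective (hv.trans hx.symm)))
    simp only [Equiv.Perm.mul_apply, swap_apply_lt_swap_apply_iff hij hi hj, sub_self]

theorem KT_swap_mul_le (V W : Ranking m) {i j : Fin m} (hij : (i : ℕ) + 1 = j) :
    KT (Equiv.swap i j * V) W ≤ KT V W + 1 := by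
  have h := KT_swap_mul V W hij
  split_ifs at h <;> omega

theorem KT_swap_mul_of_lt {V W : Ranking m} {i j : Fin m} (hij : (i : ℕ) + 1 = j)
    (hW : W (V⁻¹ i) < W (V⁻¹ j)) : KT (Equiv.swap i j * V) W = KT V W + 1 := by
  have h := KT_swap_mul V W hij
  rw [if_pos hW] at h
  omega

end Mallows

section PositionWeight

variable {m : ℕ}

noncomputable def posWeight (φ : ℝ) (a : Fin m) (W : Ranking m) (k : ℕ) : ℝ :=
  ∑ V with (V a : ℕ) = k, φ ^ KT V W

theorem sum_posWeight (φ : ℝ) (a : Fin m) (W : Ranking m) :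
    ∑ k ∈ range m, posWeight φ a W k = ∑ V : Ranking m, φ ^ KT V W :=
  sum_fiberwise_of_maps_to (fun V _ => mem_range.2 (V a).isLt) _

theorem posWeight_zero_pos {φ : ℝ} (hφ : 0 < φ) (a : Fin m) (W : Ranking m) :
    0 < posWeight φ a W 0 :=
  sum_pos (fun _ _ => pow_pos hφ _)
    ⟨_, mem_filter.2 ⟨mem_univ _, mem_Ltop_iff.1 (swap_mem_Ltop a)⟩⟩

theorem posWeight_succ (φ : ℝ) (a : Fin m) (W : Ranking m) {k : ℕ} (hk : k + 1 < m) :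
    posWeight φ a W (k + 1) = ∑ V with (V a : ℕ) = k,
      φ ^ KT (Equiv.swap ⟨k, by omega⟩ ⟨k + 1, hk⟩ * V) W := by
  rw [posWeight, eq_comm]
  refine sum_equiv (Equiv.mulLeft (Equiv.swap ⟨k, by omega⟩ ⟨k + 1, hk⟩)) (fun V => ?_)
    fun _ _ => rfl
  simp only [mem_filter, mem_univ, true_and, Equiv.coe_mulLeft, Equiv.Perm.mul_apply]
  constructor
  · intro h
    simp [show V a = ⟨k, by omega⟩ from Fin.ext h]
  · intro h
    have h' : Equiv.swap _ _ (V a) = ⟨k + 1, hk⟩ := Fin.ext h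
    rw [Equiv.swap_apply_eq_iff, Equiv.swap_apply_right] at h'
    rw [h']

theorem le_posWeight_succ {φ : ℝ} (hφ0 : 0 ≤ φ) (hφ1 : φ ≤ 1) (a : Fin m) (W : Ranking m)
    {k : ℕ} (hk : k + 1 < m) : φ * posWeight φ a W k ≤ posWeight φ a W (k + 1) := by
  rw [posWeight_succ φ a W hk, posWeight, mul_sum]
  gcongr with V
  rw [← pow_succ']
  exact pow_le_pow_of_le_one hφ0 hφ1 (KT_swap_mul_le V W rfl)

theorem posWeight_succ_of_mem_Ltop (φ : ℝ) {a : Fin m} {W : Ranking m} (hW : W ∈ Ltop a)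
    {k : ℕ} (hk : k + 1 < m) : posWeight φ a W (k + 1) = φ * posWeight φ a W k := by
  rw [posWeight_succ φ a W hk, posWeight, mul_sum]
  refine sum_congr rfl fun V hV => ?_
  have hVa : V a = ⟨k, by omega⟩ := Fin.ext (mem_filter.1 hV).2
  have ha : V⁻¹ ⟨k, by omega⟩ = a := by rw [← hVa]; exact V.symm_apply_apply a
  have hb : V⁻¹ ⟨k + 1, hk⟩ ≠ a := by
    rw [← ha]
    exact fun h => by simpa using V⁻¹.injective h
  rw [KT_swap_mul_of_lt rfl (by rw [ha]; exact hW _ hb), pow_succ']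

theorem pow_mul_posWeight_le {φ : ℝ} (hφ0 : 0 ≤ φ) (hφ1 : φ ≤ 1) (a : Fin m) (W : Ranking m)
    {k l : ℕ} (hkl : k ≤ l) (hl : l < m) :
    φ ^ l * posWeight φ a W k ≤ φ ^ k * posWeight φ a W l := by
  induction l, hkl using Nat.le_induction with
  | base => exact le_rfl
  | succ n _ ih =>
    calc φ ^ (n + 1) * posWeight φ a W k = φ * (φ ^ n * posWeight φ a W k) := by ring
      _ ≤ φ * (φ ^ k * posWeight φ a W n) := mul_le_mul_of_nonneg_left (ih (by omega)) hφ0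
      _ = φ ^ k * (φ * posWeight φ a W n) := by ring
      _ ≤ φ ^ k * posWeight φ a W (n + 1) := 
          mul_le_mul_of_nonneg_left (le_posWeight_succ hφ0 hφ1 a W hl) (pow_nonneg hφ0 k)

theorem posWeight_eq_pow_mul (φ : ℝ) {a : Fin m} {W : Ranking m} (hW : W ∈ Ltop a) {k : ℕ}
    (hk : k < m) : posWeight φ a W k = φ ^ k * posWeight φ a W 0 := by
  induction k with
  | zero => simp
  | succ n ih => rw [posWeight_succ_of_mem_Ltop φ hW hk, ih (by omega), pow_succ']; ring

theorem size_comp_apply (φ : ℝ) (a : Fin m) (W : Ranking m) (t : ℕ → ℝ) :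
    Size (mallows1 φ) (fun V => t (V a)) W
      = (∑ k ∈ range m, posWeight φ a W k * t k) / ∑ k ∈ range m, posWeight φ a W k := by
  rw [sum_posWeight, Size, sum_div, ← sum_fiberwise_of_maps_to fun V _ => mem_range.2 (V a).isLt]
  refine sum_congr rfl fun k _ => ?_
  rw [posWeight, sum_mul, sum_div]
  refine sum_congr rfl fun V hV => ?_
  rw [(mem_filter.1 hV).2, mallows1]
  ring

end PositionWeight

section Positional

variable {m : ℕ}

theorem power_comp_apply_of_mem_Ltop {φ : ℝ} (hφ : 0 < φ) {a : Fin m} {W : Ranking m}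
    (hW : W ∈ Ltop a) (t : ℕ → ℝ) :
    Power (mallows1 φ) (fun V => t (V a)) W
      = (∑ k ∈ range m, φ ^ k * t k) / ∑ k ∈ range m, φ ^ k := by
  have hsum : ∀ u : ℕ → ℝ, ∑ k ∈ range m, posWeight φ a W k * u k
      = posWeight φ a W 0 * ∑ k ∈ range m, φ ^ k * u k := fun u => by
    rw [mul_sum]
    refine sum_congr rfl fun k hk => ?_
    rw [posWeight_eq_pow_mul φ hW (mem_range.1 hk)]
    ring
  have hden := hsum 1
  simp only [Pi.one_apply, mul_one] at hden
  change Size _ _ _ = _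
  rw [size_comp_apply, hsum, hden, mul_div_mul_left _ _ (posWeight_zero_pos hφ a W).ne']

theorem size_comp_threshold_le {φ : ℝ} (hφ0 : 0 < φ) (hφ1 : φ ≤ 1) (a : Fin m)
    {p₀ : ℕ} (hp₀ : p₀ < m) (Γ : ℝ) {g : ℕ → ℝ} (hg : ∀ k, 0 ≤ g k ∧ g k ≤ 1)
    (hsum : ∑ k ∈ range m, φ ^ k * threshold p₀ Γ k = ∑ k ∈ range m, φ ^ k * g k)
    (W : Ranking m) :
    Size (mallows1 φ) (fun V => threshold p₀ Γ (V a)) W ≤ Size (mallows1 φ) (fun V => g (V a)) W := by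
  rw [size_comp_apply, size_comp_apply]
  refine div_le_div_of_nonneg_right ?_ (sum_nonneg fun k _ => sum_nonneg fun V _ => pow_nonneg hφ0.le _)
  exact sum_mul_threshold_le (fun k l hkl hl => pow_mul_posWeight_le hφ0.le hφ1 a W hkl hl) hp₀
    (pow_pos hφ0 p₀) hg hsum

theorem IsTest.exists_eq_comp_apply {a : Fin m} {F : Ranking m → ℝ} (hF : IsTest F)
    (hfib : ∀ V W : Ranking m, V a = W a → F V = F W) :
    ∃ g : ℕ → ℝ, (∀ k, 0 ≤ g k ∧ g k ≤ 1) ∧ F = fun V => g (V a) := by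
  refine ⟨fun k => if h : k < m then F (Equiv.swap a ⟨k, h⟩) else 0, fun k => ?_,
    funext fun V => ?_⟩
  · dsimp only
    split_ifs
    exacts [hF _, ⟨le_rfl, zero_le_one⟩]
  · simp only [dif_pos (V a).isLt]
    exact hfib _ _ (by simp)

/-- Averaging over the relabellings of the alternatives other than `a` turns a UMP test into a
test of the position of `a` with the same size bound and the same power. -/
theorem IsUMP.exists_comp_apply {φ α : ℝ} {a : Fin m} {f : Ranking m → ℝ}
    (hf : IsUMP (mallows1 φ) (Ltop a)ᶜ (Ltop a) α f) :
    ∃ g : ℕ → ℝ, (∀ k, 0 ≤ g k ∧ g k ≤ 1) ∧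
      SizeLe (mallows1 φ) (Ltop a)ᶜ (fun V => g (V a)) α ∧
      ∀ h1 ∈ Ltop a, Power (mallows1 φ) (fun V => g (V a)) h1 = Power (mallows1 φ) f h1 := by
  classical
  let G := ↥(MulAction.stabilizer (Ranking m) a).op
  have : Finite G := Finite.of_injective (fun g : G => (g : (Ranking m)ᵐᵒᵖ).unop)
    (MulOpposite.unop_injective.comp Subtype.val_injective)
  let : Fintype G := Fintype.ofFinite G
  have hπ : ∀ (g : G) (W V : Ranking m), mallows1 φ (g • W) (g • V) = mallows1 φ W V :=
    fun g W V => mallows1_mul_right φ W V _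
  have hLtop : ∀ (g : G) W, g • W ∈ Ltop a ↔ W ∈ Ltop a :=
    fun g W => mul_mem_Ltop_iff (Subgroup.mem_op.1 g.2)
  have hLtopc : ∀ (g : G) W, g • W ∈ (Ltop a)ᶜ ↔ W ∈ (Ltop a)ᶜ :=
    fun g W => not_congr (hLtop g W)
  obtain ⟨hftest, hfsize, -⟩ := hf _ (swap_mem_Ltop a)
  obtain ⟨g, hg, hgf⟩ := (hftest.symmetrize (G := G)).exists_eq_comp_apply (a := a) fun V W h => by
    have hσ : MulOpposite.op (V⁻¹ * W) ∈ (MulAction.stabilizer (Ranking m) a).op := by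
      simp [Subgroup.mem_op, MulAction.mem_stabilizer_iff, Equiv.Perm.smul_def, ← h]
    rw [← symmetrize_smul f ⟨_, hσ⟩ V]
    congr 1
    exact mul_inv_cancel_left V W
  refine ⟨g, hg, hgf ▸ hfsize.symmetrize hπ hLtopc, fun h1 hh1 => ?_⟩
  rw [← hgf]
  exact power_symmetrize hπ (hf.power_smul hπ hLtopc hLtop hh1)

end Positional

section Borda

variable {m : ℕ}

theorem Borda_eq (a : Fin m) (V : Ranking m) : Borda a V = m - 1 - V a := by
  rw [Borda, ← Fin.card_Ioi]
  exact card_equiv V fun b => by simp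

theorem bordaTest_eq_threshold (a : Fin m) {p₀ : ℕ} (hp₀ : p₀ < m) (Γ : ℝ) :
    bordaTest a ((m - 1 - p₀ : ℕ) : ℝ) Γ = fun V => threshold p₀ Γ (V a) := by
  funext V
  have := (V a).isLt
  simp only [bordaTest, threshold, Borda_eq, Nat.cast_lt]
  split_ifs <;> first | rfl | omega

theorem isTest_bordaTest (a : Fin m) (K : ℝ) {Γ : ℝ} (hΓ0 : 0 ≤ Γ) (hΓ1 : Γ ≤ 1) :
    IsTest (bordaTest a K Γ) := fun V => by
  unfold bordaTest
  split_ifs <;> constructor <;> linarith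

end Borda

theorem stmt17_general (m : ℕ) (φ : ℝ) (hφ0 : 0 < φ) (hφ1 : φ < 1)
    (a : Fin m) (α : ℝ)
    (hex : ∃ f : Ranking m → ℝ, IsUMP (mallows1 φ) (Ltop a)ᶜ (Ltop a) α f) :
    ∃ K Γ : ℝ, 0 ≤ Γ ∧ Γ ≤ 1 ∧
      SizeLe (mallows1 φ) (Ltop a)ᶜ (bordaTest a K Γ) α ∧
      IsUMP (mallows1 φ) (Ltop a)ᶜ (Ltop a) α (bordaTest a K Γ) := by
  obtain ⟨f, hf⟩ := hex
  obtain ⟨g, hg, hgsize, hgpower⟩ := hf.exists_comp_apply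
  obtain ⟨p₀, hp₀, Γ, hΓ0, hΓ1, hsum⟩ := exists_sum_mul_threshold_eq (fun k => pow_pos hφ0 k)
    a.pos (c := ∑ k ∈ range m, φ ^ k * g k)
    (sum_nonneg fun k _ => mul_nonneg (pow_pos hφ0 k).le (hg k).1)
    (sum_le_sum fun k _ => mul_le_of_le_one_right (pow_pos hφ0 k).le (hg k).2)
  have hsize : SizeLe (mallows1 φ) (Ltop a)ᶜ (bordaTest a (m - 1 - p₀ : ℕ) Γ) α := by
    rw [bordaTest_eq_threshold a hp₀]
    exact fun h0 hh0 =>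
      (size_comp_threshold_le hφ0 hφ1.le a hp₀ Γ hg hsum h0).trans (hgsize h0 hh0)
  refine ⟨_, Γ, hΓ0, hΓ1, hsize, fun h1 hh1 => ⟨isTest_bordaTest a _ hΓ0 hΓ1, hsize, ?_⟩⟩
  intro f' hf' hf'size
  calc Power (mallows1 φ) f' h1 ≤ Power (mallows1 φ) f h1 := (hf h1 hh1).2.2 f' hf' hf'size
    _ = Power (mallows1 φ) (fun V => g (V a)) h1 := (hgpower h1 hh1).symm
    _ = Power (mallows1 φ) (bordaTest a (m - 1 - p₀ : ℕ) Γ) h1 := by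
      rw [bordaTest_eq_threshold a hp₀, power_comp_apply_of_mem_Ltop hφ0 hh1,
        power_comp_apply_of_mem_Ltop hφ0 hh1, hsum]

/-- If a level-`α` UMP test exists for `H₀ = ℒ(𝒜)∖L_{a≻others}` vs
`H₁ = L_{a≻others}`, then some Borda-score threshold test with size at most `α` over `H₀`
is a level-`α` UMP test for `H₀` vs `H₁`. -/
theorem stmt17 (m : ℕ) (φ : ℝ) (hφ0 : 0 < φ) (hφ1 : φ < 1)
    (a : Fin m) (α : ℝ) (hα0 : 0 < α) (hα1 : α < 1)
    (hex : ∃ f : Ranking m → ℝ, IsUMP (mallows1 φ) (Ltop a)ᶜ (Ltop a) α f) :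
    ∃ K Γ : ℝ, 0 ≤ Γ ∧ Γ ≤ 1 ∧
      SizeLe (mallows1 φ) (Ltop a)ᶜ (bordaTest a K Γ) α ∧
      IsUMP (mallows1 φ) (Ltop a)ᶜ (Ltop a) α (bordaTest a K Γ) :=
  stmt17_general m φ hφ0 hφ1 a α hex

end Voting
end

section
/- Under Mallows' model with a single sample (n=1) and any dispersion 0<φ<1, fix an alternative a and for 0 ≤ s ≤ m−1 let T_s = {V ∈ ℒ(𝒜) : Borda_a(V) = s}. Then for any integers 0 ≤ s₂ < s₁ ≤ m−1: (i) for every W ∈ ℒ(𝒜) in which a is not ranked at the top (i.e., Borda_a(W) ≤ m−2), π_W(T_{s₂}) > φ^{s₁−s₂} · π_W(T_{s₁}); and (ii) for every W ∈ ℒ(𝒜) in which a is ranked at the top, π_W(T_{s₂}) = φ^{s₁−s₂} · π_W(T_{s₁}). -/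
namespace Voting

open Finset

/-!
Put `a` at position `p` (Borda score `m - 1 - p`). Left multiplication by the transposition of
the adjacent positions `p, p + 1` is a bijection from the rankings with `a` at `p` onto those with
`a` at `p + 1`, and it changes the Kendall-tau distance to `W` by exactly one: by `+1` if `W`
prefers `a` to the alternative that moves above it, by `-1` otherwise. Hence the Mallows weight
of Borda level `t` is at least `φ` times that of level `t + 1`, with equality when `a` tops `W`
and strict inequality otherwise (some ranking puts an alternative `b` with `W b < W a` right
below `a`). Iterating gives the factor `φ ^ (s₁ - s₂)`.
-/

open Equiv

theorem _root_.CovBy.swap_lt_swap_iff {α : Type*} [LinearOrder α] {x y : α}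
    (h : x ⋖ y) {i j : α} (hxy : (i, j) ≠ (x, y)) (hyx : (i, j) ≠ (y, x)) :
    swap x y i < swap x y j ↔ i < j := by
  have hlt := h.lt
  have hx : ∀ k, k ≠ x → k ≠ y → (x < k ↔ y < k) := fun k hkx hky =>
    ⟨fun hk => lt_of_le_of_ne (h.ge_of_gt hk) (Ne.symm hky), hlt.trans⟩
  have hy : ∀ k, k ≠ x → k ≠ y → (k < y ↔ k < x) := fun k hkx hky =>
    ⟨fun hk => lt_of_le_of_ne (h.le_of_lt hk) hkx, fun hk => hk.trans hlt⟩
  simp only [swap_apply_def]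
  split_ifs <;> simp_all

theorem exists_perm_apply_eq_apply_eq {α : Type*} [DecidableEq α] {a b x y : α}
    (hab : a ≠ b) (hxy : x ≠ y) : ∃ σ : Perm α, σ a = x ∧ σ b = y := by
  have hb : swap a x b ≠ x := fun h =>
    hab (by rw [swap_apply_eq_iff, swap_apply_right] at h; exact h.symm)
  exact ⟨swap (swap a x b) y * swap a x,
    by rw [Perm.mul_apply, swap_apply_left, swap_apply_of_ne_of_ne hb.symm hxy], by simp⟩

theorem eq_pow_mul_of_eq_mul_succ {M : Type*} [Monoid M] {f : ℕ → M} {c : M} {N : ℕ}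
    (h : ∀ t < N, f t = c * f (t + 1)) {s d : ℕ} (hsd : s + d ≤ N) :
    f s = c ^ d * f (s + d) := by
  induction d with
  | zero => simp
  | succ d ih => rw [ih (by omega), h (s + d) (by omega), pow_succ, mul_assoc, add_assoc]

theorem pow_mul_lt_of_mul_succ_lt {R : Type*} [Semiring R] [PartialOrder R]
    [IsStrictOrderedRing R] {f : ℕ → R} {c : R} (hc : 0 < c) {N : ℕ}
    (h : ∀ t < N, c * f (t + 1) < f t) {s : ℕ} :
    ∀ {d : ℕ}, 0 < d → s + d ≤ N → c ^ d * f (s + d) < f s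
  | 1, _, hsd => by simpa using h s (by omega)
  | d + 2, _, hsd =>
    calc c ^ (d + 2) * f (s + (d + 2)) = c ^ (d + 1) * (c * f (s + (d + 1) + 1)) := by
          rw [pow_succ, mul_assoc]; rfl
      _ < c ^ (d + 1) * f (s + (d + 1)) := mul_lt_mul_of_pos_left (h _ (by omega)) (pow_pos hc _)
      _ < f s := pow_mul_lt_of_mul_succ_lt hc h (by omega) (by omega)

variable {m : ℕ}

theorem Borda_eq_iff {a : Fin m} {V : Ranking m} {s : ℕ} :
    Borda a V = s ↔ (V a : ℕ) + s = m - 1 := by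
  have hcard : Borda a V = m - 1 - V a := by
    rw [Borda, ← Fin.card_Ioi (V a)]
    exact card_bij' (fun b _ => V b) (fun p _ => V.symm p) (by simp) (by simp) (by simp) (by simp)
  have := (V a).isLt
  omega

theorem KT_swap_mul_of_lt_s18 {x y : Fin m} (hxy : x ⋖ y) {V W : Ranking m}
    (h : W (V.symm x) < W (V.symm y)) : KT (swap x y * V) W = KT V W + 1 := by
  set u := V.symm x
  set v := V.symm y
  have hu : V u = x := V.apply_symm_apply x
  have hv : V v = y := V.apply_symm_apply y
  have huv : u ≠ v := fun h' => hxy.lt.ne (by rw [← hu, ← hv, h'])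
  have hnew : univ.filter (fun p : Fin m × Fin m => (swap x y * V) p.1 < (swap x y * V) p.2 ∧
      W p.2 < W p.1) =
      insert (v, u) (univ.filter fun p : Fin m × Fin m => V p.1 < V p.2 ∧ W p.2 < W p.1) := by
    ext ⟨b, c⟩
    simp only [mem_filter, mem_univ, true_and, mem_insert, Prod.mk.injEq]
    simp only [Perm.mul_apply]
    by_cases hbc : b = u ∧ c = v
    · obtain ⟨rfl, rfl⟩ := hbc
      simp [hu, hv, hxy.lt.not_gt, huv, h.not_gt]
    by_cases hcb : b = v ∧ c = u
    · obtain ⟨rfl, rfl⟩ := hcb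
      simp [hu, hv, hxy.lt, h]
    rw [hxy.swap_lt_swap_iff]
    · tauto
    · simpa [← hu, ← hv] using hbc
    · simpa [← hu, ← hv] using hcb
  rw [KT, hnew, card_insert_of_notMem, KT]
  simp [hu, hv, hxy.lt.not_gt]

theorem KT_eq_KT_swap_mul_add_one {x y : Fin m} (hxy : x ⋖ y) {V W : Ranking m}
    (h : W (V.symm y) < W (V.symm x)) : KT V W = KT (swap x y * V) W + 1 := by
  have hsymm : ∀ z, (swap x y * V).symm z = V.symm (swap x y z) := fun z => by
    simp [Perm.mul_def, symm_swap]
  have := KT_swap_mul_of_lt_s18 hxy (V := swap x y * V) (W := W) (by simpa [hsymm] using h)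
  rwa [← mul_assoc, swap_mul_self, one_mul] at this

def bordaLevel (a : Fin m) (s : ℕ) : Finset (Ranking m) :=
  univ.filter fun V => Borda a V = s

theorem mem_bordaLevel_iff {a p : Fin m} {s : ℕ} (hp : (p : ℕ) + s = m - 1) {V : Ranking m} :
    V ∈ bordaLevel a s ↔ V a = p := by
  rw [bordaLevel, mem_filter, Borda_eq_iff, Fin.ext_iff]
  simp only [mem_univ, true_and]
  omega

theorem exists_covBy_of_lt_pred {t : ℕ} (ht : t < m - 1) :
    ∃ x y : Fin m, x ⋖ y ∧ (x : ℕ) + (t + 1) = m - 1 ∧ (y : ℕ) + t = m - 1 :=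
  ⟨⟨m - 2 - t, by omega⟩, ⟨m - 1 - t, by omega⟩, by simp; omega, by simp; omega,
    by simp; omega⟩

theorem sum_bordaLevel_eq_sum_swap_mul {a x y : Fin m} {t : ℕ} (hx : (x : ℕ) + (t + 1) = m - 1)
    (hy : (y : ℕ) + t = m - 1) {M : Type*} [AddCommMonoid M] (f : Ranking m → M) :
    ∑ V ∈ bordaLevel a t, f V = ∑ V ∈ bordaLevel a (t + 1), f (swap x y * V) := by
  refine (sum_equiv (Equiv.mulLeft (swap x y)) (fun V => ?_) (fun _ _ => rfl)).symm
  rw [mem_bordaLevel_iff hx, mem_bordaLevel_iff hy, coe_mulLeft, Perm.mul_apply,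
    swap_apply_eq_iff, swap_apply_right]

section Weights

variable {x y : Fin m} {V W : Ranking m} {φ : ℝ}

theorem pow_KT_swap_mul_of_lt (hxy : x ⋖ y) (h : W (V.symm x) < W (V.symm y)) :
    φ ^ KT (swap x y * V) W = φ * φ ^ KT V W := by
  rw [KT_swap_mul_of_lt_s18 hxy h, pow_succ']

theorem mul_pow_KT_lt_pow_KT_swap_mul (hxy : x ⋖ y) (hφ0 : 0 < φ) (hφ1 : φ < 1)
    (h : W (V.symm y) < W (V.symm x)) : φ * φ ^ KT V W < φ ^ KT (swap x y * V) W := by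
  rw [KT_eq_KT_swap_mul_add_one hxy h, pow_succ', ← mul_assoc]
  exact mul_lt_of_lt_one_left (pow_pos hφ0 _)
    (mul_lt_one_of_nonneg_of_lt_one_left hφ0.le hφ1 hφ1.le)

theorem mul_pow_KT_le_pow_KT_swap_mul (hxy : x ⋖ y) (hφ0 : 0 < φ) (hφ1 : φ < 1) :
    φ * φ ^ KT V W ≤ φ ^ KT (swap x y * V) W := by
  have hne : W (V.symm x) ≠ W (V.symm y) := by simpa using hxy.lt.ne
  rcases hne.lt_or_gt with h | h
  · exact (pow_KT_swap_mul_of_lt hxy h).ge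
  · exact (mul_pow_KT_lt_pow_KT_swap_mul hxy hφ0 hφ1 h).le

end Weights

variable {a : Fin m} {W : Ranking m} {t : ℕ}

theorem sum_bordaLevel_eq_mul_succ_of_mem_Ltop (hW : W ∈ Ltop a) (ht : t < m - 1) (φ : ℝ) :
    ∑ V ∈ bordaLevel a t, φ ^ KT V W = φ * ∑ V ∈ bordaLevel a (t + 1), φ ^ KT V W := by
  obtain ⟨x, y, hxy, hx, hy⟩ := exists_covBy_of_lt_pred ht
  rw [sum_bordaLevel_eq_sum_swap_mul hx hy, mul_sum]
  refine sum_congr rfl fun V hV => pow_KT_swap_mul_of_lt hxy ?_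
  have hVx : V.symm x = a := by rw [symm_apply_eq, (mem_bordaLevel_iff hx).1 hV]
  rw [hVx]
  exact hW _ fun h => hxy.lt.ne (V.symm.injective (hVx.trans h.symm))

theorem mul_sum_bordaLevel_succ_lt_of_notMem_Ltop (hW : W ∉ Ltop a) {φ : ℝ} (hφ0 : 0 < φ)
    (hφ1 : φ < 1) (ht : t < m - 1) :
    φ * ∑ V ∈ bordaLevel a (t + 1), φ ^ KT V W < ∑ V ∈ bordaLevel a t, φ ^ KT V W := by
  obtain ⟨x, y, hxy, hx, hy⟩ := exists_covBy_of_lt_pred ht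
  obtain ⟨b, hba, hb⟩ : ∃ b, b ≠ a ∧ W b < W a := by
    simp only [Ltop, Set.mem_ofPred_eq, not_forall, not_lt] at hW
    obtain ⟨b, hba, hb⟩ := hW
    exact ⟨b, hba, hb.lt_of_ne (W.injective.ne hba)⟩
  obtain ⟨V₀, hV₀a, hV₀b⟩ := exists_perm_apply_eq_apply_eq hba.symm hxy.lt.ne
  rw [sum_bordaLevel_eq_sum_swap_mul hx hy, mul_sum]
  refine sum_lt_sum (fun V _ => mul_pow_KT_le_pow_KT_swap_mul hxy hφ0 hφ1)
    ⟨V₀, (mem_bordaLevel_iff hx).2 hV₀a, mul_pow_KT_lt_pow_KT_swap_mul hxy hφ0 hφ1 ?_⟩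
  rwa [(symm_apply_eq _).2 hV₀a.symm, (symm_apply_eq _).2 hV₀b.symm]

theorem sum_mallows1 (φ : ℝ) (W : Ranking m) (S : Finset (Ranking m)) :
    ∑ V ∈ S, mallows1 φ W V = (∑ V ∈ S, φ ^ KT V W) / ∑ U : Ranking m, φ ^ KT U W :=
  (sum_div S _ _).symm

theorem stmt18_general (m : ℕ) (φ : ℝ) (hφ0 : 0 < φ) (hφ1 : φ < 1)
    (a : Fin m) (s₁ s₂ : ℕ) (hs : s₂ < s₁) (hs₁ : s₁ ≤ m - 1) :
    (∀ W : Ranking m, W ∉ Ltop a →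
      φ ^ (s₁ - s₂) *
          ∑ V ∈ Finset.univ.filter (fun V : Ranking m => Borda a V = s₁),
            mallows1 φ W V <
        ∑ V ∈ Finset.univ.filter (fun V : Ranking m => Borda a V = s₂),
          mallows1 φ W V) ∧
    (∀ W : Ranking m, W ∈ Ltop a →
      ∑ V ∈ Finset.univ.filter (fun V : Ranking m => Borda a V = s₂),
          mallows1 φ W V =
        φ ^ (s₁ - s₂) *
          ∑ V ∈ Finset.univ.filter (fun V : Ranking m => Borda a V = s₁),
            mallows1 φ W V) := by
  obtain ⟨d, rfl⟩ : ∃ d, s₁ = s₂ + d := ⟨s₁ - s₂, by omega⟩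
  have hZ (W : Ranking m) : 0 < ∑ U : Ranking m, φ ^ KT U W :=
    sum_pos (fun U _ => pow_pos hφ0 _) univ_nonempty
  simp only [Nat.add_sub_cancel_left]
  refine ⟨fun W hW => ?_, fun W hW => ?_⟩
  · rw [sum_mallows1, sum_mallows1, ← mul_div_assoc]
    exact div_lt_div_of_pos_right
      (pow_mul_lt_of_mul_succ_lt (f := fun t => ∑ V ∈ bordaLevel a t, φ ^ KT V W) hφ0
        (fun _ ht => mul_sum_bordaLevel_succ_lt_of_notMem_Ltop hW hφ0 hφ1 ht) (by omega) hs₁)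
      (hZ W)
  · rw [sum_mallows1, sum_mallows1, ← mul_div_assoc]
    exact congrArg (· / _)
      (eq_pow_mul_of_eq_mul_succ (f := fun t => ∑ V ∈ bordaLevel a t, φ ^ KT V W)
        (fun _ ht => sum_bordaLevel_eq_mul_succ_of_mem_Ltop hW ht φ) hs₁)

/-- **Cost-effectiveness of Borda levels.** With
`T_s = {V : Borda_a(V) = s}` and `s₂ < s₁ ≤ m−1` :
(i) for every `W` in which `a` is not ranked at the top,
`π_W(T_{s₂}) > φ^{s₁−s₂}·π_W(T_{s₁})`;
(ii) for every `W` in which `a` is ranked at the top,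
`π_W(T_{s₂}) = φ^{s₁−s₂}·π_W(T_{s₁})`. -/
theorem stmt18 (m : ℕ) (hm : 2 ≤ m) (φ : ℝ) (hφ0 : 0 < φ) (hφ1 : φ < 1)
    (a : Fin m) (s₁ s₂ : ℕ) (hs : s₂ < s₁) (hs₁ : s₁ ≤ m - 1) :
    (∀ W : Ranking m, W ∉ Ltop a →
      φ ^ (s₁ - s₂) *
          ∑ V ∈ Finset.univ.filter (fun V : Ranking m => Borda a V = s₁),
            mallows1 φ W V <
        ∑ V ∈ Finset.univ.filter (fun V : Ranking m => Borda a V = s₂),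
          mallows1 φ W V) ∧
    (∀ W : Ranking m, W ∈ Ltop a →
      ∑ V ∈ Finset.univ.filter (fun V : Ranking m => Borda a V = s₂),
          mallows1 φ W V =
        φ ^ (s₁ - s₂) *
          ∑ V ∈ Finset.univ.filter (fun V : Ranking m => Borda a V = s₁),
            mallows1 φ W V) :=
  stmt18_general m φ hφ0 hφ1 a s₁ s₂ hs hs₁

end Voting
end

section
/- Under Mallows' model with a single sample (n=1) over three alternatives 𝒜 = {a₁,a₂,a₃} and any dispersion 0<φ<1, let h₁ = [a₁≻a₂≻a₃], H₀ = ℒ(𝒜)∖{h₁}, and let Λ be the uniform distribution over the two rankings {[a₂≻a₁≻a₃], [a₁≻a₃≻a₂]}. Then Λ is a uniformly least favorable distribution for H₀ vs h₁. -/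
namespace Voting

open Finset

section LFD

variable {S Θ : Type*} [Fintype S] [Fintype Θ]

/-- Likelihood ratio of `P` for the mixture `Λ` over `H0` vs `h1`. -/
noncomputable def Ratio (π : Θ → S → ℝ) (Λ : Θ → ℝ) (h1 : Θ) (P : S) : ℝ :=
  π h1 P / ∑ θ, Λ θ * π θ P

/-- `Λ` is a probability distribution supported on `H0`. -/
def IsDistOn {Θ : Type*} [Fintype Θ] (Λ : Θ → ℝ) (H0 : Set Θ) : Prop :=
  (∀ θ, 0 ≤ Λ θ) ∧ (∀ θ, θ ∉ H0 → Λ θ = 0) ∧ (∑ θ, Λ θ) = 1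

/-- The likelihood ratio test with threshold `k` and randomization `γ`. -/
noncomputable def lrTest (π : Θ → S → ℝ) (Λ : Θ → ℝ) (h1 : Θ) (k γ : ℝ) : S → ℝ :=
  fun P =>
    if k < Ratio π Λ h1 P then 1
    else if Ratio π Λ h1 P < k then 0
    else γ

/-- `Λ` is a level-`α` least favorable distribution for `H0` vs `h1`:
some level-`α` likelihood ratio test for `Λ` vs `h1` is level-`α` most powerful. -/
def IsLFD (π : Θ → S → ℝ) (H0 : Set Θ) (h1 : Θ) (Λ : Θ → ℝ) (α : ℝ) : Prop :=
  ∃ k γ : ℝ, 0 ≤ k ∧ 0 ≤ γ ∧ γ ≤ 1 ∧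
    SizeEq π H0 (lrTest π Λ h1 k γ) α ∧
    IsMostPowerful π H0 h1 α (lrTest π Λ h1 k γ)

/-- `Λ` is a uniformly least favorable distribution for `H0` vs `h1`. -/
def IsULFD (π : Θ → S → ℝ) (H0 : Set Θ) (h1 : Θ) (Λ : Θ → ℝ) : Prop :=
  ∀ α : ℝ, 0 < α → α < 1 → IsLFD π H0 h1 Λ α

end LFD

namespace S19

def p0 : Ranking 3 := Equiv.refl (Fin 3)
def p1 : Ranking 3 := Equiv.swap 0 1
def p2 : Ranking 3 := Equiv.swap 1 2
def p3 : Ranking 3 := Equiv.swap 0 2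
def p4 : Ranking 3 := Equiv.swap 0 1 * Equiv.swap 1 2
def p5 : Ranking 3 := Equiv.swap 1 2 * Equiv.swap 0 1

lemma enum : (Finset.univ : Finset (Ranking 3)) = {p0,p1,p2,p3,p4,p5} := by decide

lemma sumsix (g : Ranking 3 → ℝ) :
    ∑ V, g V = g p0 + g p1 + g p2 + g p3 + g p4 + g p5 := by
  rw [enum, Finset.sum_insert (by decide), Finset.sum_insert (by decide),
    Finset.sum_insert (by decide), Finset.sum_insert (by decide),
    Finset.sum_insert (by decide), Finset.sum_singleton]
  ring

@[simp] lemma kt00 : KT p0 p0 = 0 := by decide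
@[simp] lemma kt01 : KT p0 p1 = 1 := by decide
@[simp] lemma kt02 : KT p0 p2 = 1 := by decide
@[simp] lemma kt03 : KT p0 p3 = 3 := by decide
@[simp] lemma kt04 : KT p0 p4 = 2 := by decide
@[simp] lemma kt05 : KT p0 p5 = 2 := by decide
@[simp] lemma kt10 : KT p1 p0 = 1 := by decide
@[simp] lemma kt11 : KT p1 p1 = 0 := by decide
@[simp] lemma kt12 : KT p1 p2 = 2 := by decide
@[simp] lemma kt13 : KT p1 p3 = 2 := by decide
@[simp] lemma kt14 : KT p1 p4 = 3 := by decide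
@[simp] lemma kt15 : KT p1 p5 = 1 := by decide
@[simp] lemma kt20 : KT p2 p0 = 1 := by decide
@[simp] lemma kt21 : KT p2 p1 = 2 := by decide
@[simp] lemma kt22 : KT p2 p2 = 0 := by decide
@[simp] lemma kt23 : KT p2 p3 = 2 := by decide
@[simp] lemma kt24 : KT p2 p4 = 1 := by decide
@[simp] lemma kt25 : KT p2 p5 = 3 := by decide
@[simp] lemma kt30 : KT p3 p0 = 3 := by decide
@[simp] lemma kt31 : KT p3 p1 = 2 := by decide
@[simp] lemma kt32 : KT p3 p2 = 2 := by decide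
@[simp] lemma kt33 : KT p3 p3 = 0 := by decide
@[simp] lemma kt34 : KT p3 p4 = 1 := by decide
@[simp] lemma kt35 : KT p3 p5 = 1 := by decide
@[simp] lemma kt40 : KT p4 p0 = 2 := by decide
@[simp] lemma kt41 : KT p4 p1 = 3 := by decide
@[simp] lemma kt42 : KT p4 p2 = 1 := by decide
@[simp] lemma kt43 : KT p4 p3 = 1 := by decide
@[simp] lemma kt44 : KT p4 p4 = 0 := by decide
@[simp] lemma kt45 : KT p4 p5 = 2 := by decide
@[simp] lemma kt50 : KT p5 p0 = 2 := by decide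
@[simp] lemma kt51 : KT p5 p1 = 1 := by decide
@[simp] lemma kt52 : KT p5 p2 = 3 := by decide
@[simp] lemma kt53 : KT p5 p3 = 1 := by decide
@[simp] lemma kt54 : KT p5 p4 = 2 := by decide
@[simp] lemma kt55 : KT p5 p5 = 0 := by decide


lemma Zsum (φ : ℝ) (W : Ranking 3) :
    ∑ U : Ranking 3, φ ^ KT U W = 1 + 2*φ + 2*φ^2 + φ^3 := by
  have hW : W ∈ ({p0,p1,p2,p3,p4,p5} : Finset (Ranking 3)) := by
    rw [← enum]; exact Finset.mem_univ W
  fin_cases hW <;> · rw [sumsix]; simp; ring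

lemma m1_eq (φ : ℝ) (W V : Ranking 3) :
    mallows1 φ W V = φ ^ KT V W / (1 + 2*φ + 2*φ^2 + φ^3) := by
  rw [mallows1, Zsum]

lemma m1_pos {φ : ℝ} (hφ0 : 0 < φ) (W V : Ranking 3) : 0 < mallows1 φ W V := by
  rw [m1_eq]
  have h2 := pow_pos hφ0 2
  have h3 := pow_pos hφ0 3
  exact div_pos (pow_pos hφ0 _) (by linarith)

lemma size_eval (φ : ℝ) (h : Ranking 3 → ℝ) (W : Ranking 3) :
    Size (mallows1 φ) h W =
      (φ ^ KT p0 W * h p0 + φ ^ KT p1 W * h p1 + φ ^ KT p2 W * h p2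
        + φ ^ KT p3 W * h p3 + φ ^ KT p4 W * h p4 + φ ^ KT p5 W * h p5)
        / (1 + 2*φ + 2*φ^2 + φ^3) := by
  rw [Size, sumsix (fun P => mallows1 φ W P * h P)]
  simp only [m1_eq]
  ring

/-- The distribution `Λ` of the statement. -/
noncomputable def Lam : Ranking 3 → ℝ := fun θ =>
  if θ = Equiv.swap (0 : Fin 3) 1 then (1 : ℝ) / 2
  else if θ = Equiv.swap (1 : Fin 3) 2 then (1 : ℝ) / 2 else 0

lemma lam0 : Lam p0 = 0 := by rw [Lam]; rw [if_neg (by decide), if_neg (by decide)]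
lemma lam1 : Lam p1 = 1/2 := by rw [Lam]; rw [if_pos (show p1 = Equiv.swap (0:Fin 3) 1 from rfl)]
lemma lam2 : Lam p2 = 1/2 := by
  rw [Lam]; rw [if_neg (by decide), if_pos (show p2 = Equiv.swap (1:Fin 3) 2 from rfl)]
lemma lam3 : Lam p3 = 0 := by rw [Lam]; rw [if_neg (by decide), if_neg (by decide)]
lemma lam4 : Lam p4 = 0 := by rw [Lam]; rw [if_neg (by decide), if_neg (by decide)]
lemma lam5 : Lam p5 = 0 := by rw [Lam]; rw [if_neg (by decide), if_neg (by decide)]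

lemma qmix_eq (φ : ℝ) (V : Ranking 3) :
    ∑ θ : Ranking 3, Lam θ * mallows1 φ θ V = (mallows1 φ p1 V + mallows1 φ p2 V) / 2 := by
  rw [sumsix (fun θ => Lam θ * mallows1 φ θ V)]
  simp only [lam0, lam1, lam2, lam3, lam4, lam5]
  ring

/-- Piecewise test with value `x` at the top ranking, `z` at the bottom one, `y` elsewhere. -/
noncomputable def ft (x y z : ℝ) : Ranking 3 → ℝ := fun V =>
  if V = p0 then x else if V = p3 then z else y

lemma ft_p0 (x y z : ℝ) : ft x y z p0 = x := by
  show (if p0 = p0 then x else if p0 = p3 then z else y) = x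
  rw [if_pos rfl]
lemma ft_p1 (x y z : ℝ) : ft x y z p1 = y := by
  simp only [ft]; rw [if_neg (by decide), if_neg (by decide)]
lemma ft_p2 (x y z : ℝ) : ft x y z p2 = y := by
  simp only [ft]; rw [if_neg (by decide), if_neg (by decide)]
lemma ft_p3 (x y z : ℝ) : ft x y z p3 = z := by
  show (if p3 = p0 then x else if p3 = p3 then z else y) = z
  rw [if_neg (by decide), if_pos rfl]
lemma ft_p4 (x y z : ℝ) : ft x y z p4 = y := by
  simp only [ft]; rw [if_neg (by decide), if_neg (by decide)]
lemma ft_p5 (x y z : ℝ) : ft x y z p5 = y := by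
  simp only [ft]; rw [if_neg (by decide), if_neg (by decide)]

section Ratios
variable {φ : ℝ} (hφ0 : 0 < φ)
include hφ0

lemma ratio_p0 : Ratio (mallows1 φ) Lam p0 p0 = 1/φ := by
  have hZ : (1 + 2*φ + 2*φ^2 + φ^3) ≠ 0 := by
    have h2 := pow_pos hφ0 2; have h3 := pow_pos hφ0 3; positivity
  have hφ : φ ≠ 0 := hφ0.ne'
  rw [Ratio, qmix_eq, m1_eq, m1_eq, m1_eq]
  simp only [kt00, kt01, kt02]
  field_simp
  ring

lemma ratio_p1 : Ratio (mallows1 φ) Lam p0 p1 = 2*φ/(1+φ^2) := by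
  have hZ : (1 + 2*φ + 2*φ^2 + φ^3) ≠ 0 := by
    have h2 := pow_pos hφ0 2; have h3 := pow_pos hφ0 3; positivity
  have h2 : (1 + φ^2) ≠ 0 := by positivity
  rw [Ratio, qmix_eq, m1_eq, m1_eq, m1_eq]
  simp only [kt10, kt11, kt12]
  field_simp

lemma ratio_p2 : Ratio (mallows1 φ) Lam p0 p2 = 2*φ/(1+φ^2) := by
  have hZ : (1 + 2*φ + 2*φ^2 + φ^3) ≠ 0 := by
    have h2 := pow_pos hφ0 2; have h3 := pow_pos hφ0 3; positivity
  have h2 : (1 + φ^2) ≠ 0 := by positivity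
  rw [Ratio, qmix_eq, m1_eq, m1_eq, m1_eq]
  simp only [kt20, kt21, kt22]
  field_simp
  ring

lemma ratio_p3 : Ratio (mallows1 φ) Lam p0 p3 = φ := by
  have hZ : (1 + 2*φ + 2*φ^2 + φ^3) ≠ 0 := by
    have h2 := pow_pos hφ0 2; have h3 := pow_pos hφ0 3; positivity
  have hφ : φ ≠ 0 := hφ0.ne'
  rw [Ratio, qmix_eq, m1_eq, m1_eq, m1_eq]
  simp only [kt30, kt31, kt32]
  field_simp
  ring

lemma ratio_p4 : Ratio (mallows1 φ) Lam p0 p4 = 2*φ/(1+φ^2) := by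
  have hZ : (1 + 2*φ + 2*φ^2 + φ^3) ≠ 0 := by
    have h2 := pow_pos hφ0 2; have h3 := pow_pos hφ0 3; positivity
  have h2 : (1 + φ^2) ≠ 0 := by positivity
  have hφ : φ ≠ 0 := hφ0.ne'
  rw [Ratio, qmix_eq, m1_eq, m1_eq, m1_eq]
  simp only [kt40, kt41, kt42]
  field_simp
  ring

lemma ratio_p5 : Ratio (mallows1 φ) Lam p0 p5 = 2*φ/(1+φ^2) := by
  have hZ : (1 + 2*φ + 2*φ^2 + φ^3) ≠ 0 := by
    have h2 := pow_pos hφ0 2; have h3 := pow_pos hφ0 3; positivity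
  have h2 : (1 + φ^2) ≠ 0 := by positivity
  have hφ : φ ≠ 0 := hφ0.ne'
  rw [Ratio, qmix_eq, m1_eq, m1_eq, m1_eq]
  simp only [kt50, kt51, kt52]
  field_simp

end Ratios

/-- Core lemma: any likelihood-ratio test which agrees with the monotone piecewise test
`ft x y z` and whose size matches `α` is a most powerful test of exact size `α`. -/
lemma core (φ α k γ x y z : ℝ) (hφ0 : 0 < φ) (hφ1 : φ < 1)
    (hk : 0 ≤ k) (hx1 : x ≤ 1) (hz0 : 0 ≤ z) (hzy : z ≤ y) (hyx : y ≤ x)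
    (hval : ∀ V, lrTest (mallows1 φ) Lam p0 k γ V = ft x y z V)
    (hα : α * (1 + 2*φ + 2*φ^2 + φ^3) = x*φ + y*(1 + φ + φ^2 + φ^3) + z*φ^2) :
    SizeEq (mallows1 φ) {V : Ranking 3 | V ≠ Equiv.refl (Fin 3)}
      (lrTest (mallows1 φ) Lam p0 k γ) α ∧
    IsMostPowerful (mallows1 φ) {V : Ranking 3 | V ≠ Equiv.refl (Fin 3)} p0 α
      (lrTest (mallows1 φ) Lam p0 k γ) := by
  have h2p := pow_pos hφ0 2
  have h3p := pow_pos hφ0 3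
  have hZpos : (0:ℝ) < 1 + 2*φ + 2*φ^2 + φ^3 := by linarith
  have hfeq : lrTest (mallows1 φ) Lam p0 k γ = ft x y z := funext hval
  -- sizes of the piecewise test under the five null hypotheses
  have s1 : Size (mallows1 φ) (ft x y z) p1 = α := by
    rw [size_eval]
    simp only [kt01, kt11, kt21, kt31, kt41, kt51, ft_p0, ft_p1, ft_p2, ft_p3, ft_p4, ft_p5]
    rw [div_eq_iff hZpos.ne']
    linear_combination (-1 : ℝ) * hα
  have s2 : Size (mallows1 φ) (ft x y z) p2 = α := by
    rw [size_eval]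
    simp only [kt02, kt12, kt22, kt32, kt42, kt52, ft_p0, ft_p1, ft_p2, ft_p3, ft_p4, ft_p5]
    rw [div_eq_iff hZpos.ne']
    linear_combination (-1 : ℝ) * hα
  have s3 : Size (mallows1 φ) (ft x y z) p3 ≤ α := by
    rw [size_eval]
    simp only [kt03, kt13, kt23, kt33, kt43, kt53, ft_p0, ft_p1, ft_p2, ft_p3, ft_p4, ft_p5]
    rw [div_le_iff₀ hZpos]
    have h1 : (0:ℝ) ≤ ((x - y)*φ + (y - z)) * ((1 - φ)*(1 + φ)) := by
      apply mul_nonneg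
      · have := mul_nonneg (sub_nonneg.mpr hyx) hφ0.le
        linarith
      · apply mul_nonneg <;> linarith
    nlinarith [hα, h1]
  have s4 : Size (mallows1 φ) (ft x y z) p4 ≤ α := by
    rw [size_eval]
    simp only [kt04, kt14, kt24, kt34, kt44, kt54, ft_p0, ft_p1, ft_p2, ft_p3, ft_p4, ft_p5]
    rw [div_le_iff₀ hZpos]
    nlinarith [hα, mul_nonneg (mul_nonneg (sub_nonneg.mpr (hzy.trans hyx)) hφ0.le)
      (sub_nonneg.mpr hφ1.le)]
  have s5 : Size (mallows1 φ) (ft x y z) p5 ≤ α := by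
    rw [size_eval]
    simp only [kt05, kt15, kt25, kt35, kt45, kt55, ft_p0, ft_p1, ft_p2, ft_p3, ft_p4, ft_p5]
    rw [div_le_iff₀ hZpos]
    nlinarith [hα, mul_nonneg (mul_nonneg (sub_nonneg.mpr (hzy.trans hyx)) hφ0.le)
      (sub_nonneg.mpr hφ1.le)]
  have hmem1 : p1 ∈ {V : Ranking 3 | V ≠ Equiv.refl (Fin 3)} := by
    simp only [Set.mem_setOf_eq]; decide
  have hmem2 : p2 ∈ {V : Ranking 3 | V ≠ Equiv.refl (Fin 3)} := by
    simp only [Set.mem_setOf_eq]; decide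
  have hle : SizeLe (mallows1 φ) {V : Ranking 3 | V ≠ Equiv.refl (Fin 3)} (ft x y z) α := by
    intro h0 hh0
    have hh0' : h0 ≠ Equiv.refl (Fin 3) := hh0
    have hm : h0 ∈ ({p0,p1,p2,p3,p4,p5} : Finset (Ranking 3)) := by
      rw [← enum]; exact Finset.mem_univ _
    fin_cases hm
    · exact absurd rfl hh0'
    · exact le_of_eq s1
    · exact le_of_eq s2
    · exact s3
    · exact s4
    · exact s5
  refine ⟨⟨by rw [hfeq]; exact hle, p1, hmem1, by rw [hfeq]; exact s1⟩, ?_, ?_, ?_⟩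
  · -- IsTest
    intro P
    rw [hval P]
    simp only [ft]
    split_ifs <;> constructor <;> linarith
  · rw [hfeq]; exact hle
  · -- most powerful
    intro g hg hgle
    have qpos : ∀ P : Ranking 3, 0 < ∑ θ : Ranking 3, Lam θ * mallows1 φ θ P := by
      intro P
      rw [qmix_eq]
      have a := m1_pos hφ0 p1 P
      have b := m1_pos hφ0 p2 P
      linarith
    have point : ∀ P : Ranking 3,
        0 ≤ (mallows1 φ p0 P - k * ∑ θ : Ranking 3, Lam θ * mallows1 φ θ P) *
            (lrTest (mallows1 φ) Lam p0 k γ P - g P) := by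
      intro P
      have hq := qpos P
      obtain ⟨hg0, hg1⟩ := hg P
      simp only [lrTest]
      by_cases hlt : k < Ratio (mallows1 φ) Lam p0 P
      · rw [if_pos hlt]
        have hR : k * (∑ θ : Ranking 3, Lam θ * mallows1 φ θ P) < mallows1 φ p0 P := by
          rw [Ratio] at hlt
          exact (lt_div_iff₀ hq).mp hlt
        exact mul_nonneg (by linarith) (by linarith)
      · rw [if_neg hlt]
        by_cases hlt2 : Ratio (mallows1 φ) Lam p0 P < k
        · rw [if_pos hlt2]
          have hR : mallows1 φ p0 P < k * (∑ θ : Ranking 3, Lam θ * mallows1 φ θ P) := by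
            rw [Ratio] at hlt2
            exact (div_lt_iff₀ hq).mp hlt2
          have hnn := mul_nonneg
            (neg_nonneg.mpr (show mallows1 φ p0 P -
              k * ∑ θ : Ranking 3, Lam θ * mallows1 φ θ P ≤ 0 by linarith))
            (neg_nonneg.mpr (show (0:ℝ) - g P ≤ 0 by linarith))
          rw [neg_mul_neg] at hnn
          exact hnn
        · rw [if_neg hlt2]
          have heqk : Ratio (mallows1 φ) Lam p0 P = k :=
            le_antisymm (not_lt.mp hlt) (not_lt.mp hlt2)
          rw [Ratio] at heqk
          rw [div_eq_iff hq.ne'] at heqk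
          rw [heqk, sub_self, zero_mul]
    have hsum : 0 ≤ ∑ P : Ranking 3,
        (mallows1 φ p0 P - k * ∑ θ : Ranking 3, Lam θ * mallows1 φ θ P) *
          (lrTest (mallows1 φ) Lam p0 k γ P - g P) :=
      Finset.sum_nonneg fun P _ => point P
    have hQ : ∀ h : Ranking 3 → ℝ,
        (∑ P : Ranking 3, (∑ θ : Ranking 3, Lam θ * mallows1 φ θ P) * h P)
          = (Size (mallows1 φ) h p1 + Size (mallows1 φ) h p2) / 2 := by
      intro h
      simp only [qmix_eq]
      rw [Size, Size]
      rw [sumsix (fun P => (mallows1 φ p1 P + mallows1 φ p2 P) / 2 * h P),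
        sumsix (fun P => mallows1 φ p1 P * h P), sumsix (fun P => mallows1 φ p2 P * h P)]
      ring
    have hQf : (∑ P : Ranking 3,
        (∑ θ : Ranking 3, Lam θ * mallows1 φ θ P) * lrTest (mallows1 φ) Lam p0 k γ P) = α := by
      rw [hQ, hfeq, s1, s2]
      ring
    have hQg : (∑ P : Ranking 3, (∑ θ : Ranking 3, Lam θ * mallows1 φ θ P) * g P) ≤ α := by
      rw [hQ]
      have a := hgle p1 hmem1
      have b := hgle p2 hmem2
      linarith
    have e1 : Power (mallows1 φ) (lrTest (mallows1 φ) Lam p0 k γ) p0 - Power (mallows1 φ) g p0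
        = (∑ P : Ranking 3,
            (mallows1 φ p0 P - k * ∑ θ : Ranking 3, Lam θ * mallows1 φ θ P) *
              (lrTest (mallows1 φ) Lam p0 k γ P - g P))
          + k * ((∑ P : Ranking 3,
              (∑ θ : Ranking 3, Lam θ * mallows1 φ θ P) * lrTest (mallows1 φ) Lam p0 k γ P)
            - ∑ P : Ranking 3, (∑ θ : Ranking 3, Lam θ * mallows1 φ θ P) * g P) := by
      rw [Power, Power]
      simp only [qmix_eq]
      rw [sumsix (fun P => mallows1 φ p0 P * lrTest (mallows1 φ) Lam p0 k γ P),
        sumsix (fun P => mallows1 φ p0 P * g P),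
        sumsix (fun P => (mallows1 φ p0 P - k * ((mallows1 φ p1 P + mallows1 φ p2 P) / 2)) *
          (lrTest (mallows1 φ) Lam p0 k γ P - g P)),
        sumsix (fun P => (mallows1 φ p1 P + mallows1 φ p2 P) / 2 *
          lrTest (mallows1 φ) Lam p0 k γ P),
        sumsix (fun P => (mallows1 φ p1 P + mallows1 φ p2 P) / 2 * g P)]
      ring
    have hkk : 0 ≤ k * ((∑ P : Ranking 3,
          (∑ θ : Ranking 3, Lam θ * mallows1 φ θ P) * lrTest (mallows1 φ) Lam p0 k γ P)
        - ∑ P : Ranking 3, (∑ θ : Ranking 3, Lam θ * mallows1 φ θ P) * g P) :=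
      mul_nonneg hk (by rw [hQf]; linarith)
    linarith [e1, hsum, hkk]

end S19


/-- **Example: a uniformly least favorable distribution for `m = 3`.**
With alternatives `a₁ = 0, a₂ = 1, a₃ = 2`, `h₁ = [a₁≻a₂≻a₃]` (the identity ranking),
`H₀ = ℒ(𝒜)∖{h₁}`, and `Λ` the uniform distribution over
`{[a₂≻a₁≻a₃], [a₁≻a₃≻a₂]}`, `Λ` is a uniformly least favorable distribution for `H₀`
vs `h₁`. -/
theorem stmt19 (φ : ℝ) (hφ0 : 0 < φ) (hφ1 : φ < 1) :
    IsULFD (mallows1 (m := 3) φ)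
      ({V : Ranking 3 | V ≠ Equiv.refl (Fin 3)}) (Equiv.refl (Fin 3))
      (fun θ : Ranking 3 =>
        if θ = Equiv.swap (0 : Fin 3) 1 then (1 : ℝ) / 2
        else if θ = Equiv.swap (1 : Fin 3) 2 then (1 : ℝ) / 2
        else 0) := by
  show IsULFD (mallows1 (m := 3) φ) {V : Ranking 3 | V ≠ Equiv.refl (Fin 3)} S19.p0 S19.Lam
  open S19 in
  intro α hα0 hα1
  have h2p := pow_pos hφ0 2
  have h3p := pow_pos hφ0 3
  have hφne : φ ≠ 0 := hφ0.ne'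
  have hZpos : (0:ℝ) < 1 + 2*φ + 2*φ^2 + φ^3 := by linarith
  have h1p2 : (0:ℝ) < 1 + φ^2 := by positivity
  have R0 := S19.ratio_p0 hφ0
  have R1 := S19.ratio_p1 hφ0
  have R2 := S19.ratio_p2 hφ0
  have R3 := S19.ratio_p3 hφ0
  have R4 := S19.ratio_p4 hφ0
  have R5 := S19.ratio_p5 hφ0
  have hmidlt : 2*φ/(1+φ^2) < 1/φ := by
    rw [div_lt_div_iff₀ h1p2 hφ0]; nlinarith
  have hlowmid : φ < 2*φ/(1+φ^2) := by
    rw [lt_div_iff₀ h1p2]; nlinarith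
  have hlow0 : φ < 1/φ := hlowmid.trans hmidlt
  by_cases c1 : α * (1 + 2*φ + 2*φ^2 + φ^3) ≤ φ
  · -- small α : reject only (randomly) at the top ranking
    set γv := α * (1 + 2*φ + 2*φ^2 + φ^3) / φ with hγdef
    have hγ0 : 0 ≤ γv := div_nonneg (mul_nonneg hα0.le hZpos.le) hφ0.le
    have hγ1 : γv ≤ 1 := (div_le_one hφ0).mpr c1
    have hval : ∀ V, lrTest (mallows1 φ) S19.Lam S19.p0 (1/φ) γv V = S19.ft γv 0 0 V := by
      intro V
      have hm : V ∈ ({S19.p0, S19.p1, S19.p2, S19.p3, S19.p4, S19.p5} :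
          Finset (Ranking 3)) := by rw [← S19.enum]; exact Finset.mem_univ _
      fin_cases hm
      · simp only [lrTest, R0]
        rw [if_neg (lt_irrefl _), if_neg (lt_irrefl _), S19.ft_p0]
      · simp only [lrTest, R1]
        rw [if_neg (not_lt.mpr hmidlt.le), if_pos hmidlt, S19.ft_p1]
      · simp only [lrTest, R2]
        rw [if_neg (not_lt.mpr hmidlt.le), if_pos hmidlt, S19.ft_p2]
      · simp only [lrTest, R3]
        rw [if_neg (not_lt.mpr hlow0.le), if_pos hlow0, S19.ft_p3]
      · simp only [lrTest, R4]
        rw [if_neg (not_lt.mpr hmidlt.le), if_pos hmidlt, S19.ft_p4]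
      · simp only [lrTest, R5]
        rw [if_neg (not_lt.mpr hmidlt.le), if_pos hmidlt, S19.ft_p5]
    have hαx : α * (1 + 2*φ + 2*φ^2 + φ^3)
        = γv*φ + 0*(1 + φ + φ^2 + φ^3) + 0*φ^2 := by
      rw [hγdef]; field_simp; try ring
    obtain ⟨hSE, hMP⟩ := S19.core φ α (1/φ) γv γv 0 0 hφ0 hφ1
      (div_nonneg zero_le_one hφ0.le) hγ1 le_rfl le_rfl hγ0 hval hαx
    exact ⟨1/φ, γv, div_nonneg zero_le_one hφ0.le, hγ0, hγ1, hSE, hMP⟩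
  · push_neg at c1
    by_cases c2 : α * (1 + 2*φ + 2*φ^2 + φ^3) ≤ φ + (1 + φ + φ^2 + φ^3)
    · -- middle α
      have hS : (0:ℝ) < 1 + φ + φ^2 + φ^3 := by linarith
      set γv := (α * (1 + 2*φ + 2*φ^2 + φ^3) - φ) / (1 + φ + φ^2 + φ^3) with hγdef
      have hγ0 : 0 ≤ γv := div_nonneg (by linarith) hS.le
      have hγ1 : γv ≤ 1 := (div_le_one hS).mpr (by linarith)
      have hk : (0:ℝ) ≤ 2*φ/(1+φ^2) := by positivity
      have hval : ∀ V, lrTest (mallows1 φ) S19.Lam S19.p0 (2*φ/(1+φ^2)) γv V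
          = S19.ft 1 γv 0 V := by
        intro V
        have hm : V ∈ ({S19.p0, S19.p1, S19.p2, S19.p3, S19.p4, S19.p5} :
            Finset (Ranking 3)) := by rw [← S19.enum]; exact Finset.mem_univ _
        fin_cases hm
        · simp only [lrTest, R0]
          rw [if_pos hmidlt, S19.ft_p0]
        · simp only [lrTest, R1]
          rw [if_neg (lt_irrefl _), if_neg (lt_irrefl _), S19.ft_p1]
        · simp only [lrTest, R2]
          rw [if_neg (lt_irrefl _), if_neg (lt_irrefl _), S19.ft_p2]
        · simp only [lrTest, R3]
          rw [if_neg (not_lt.mpr hlowmid.le), if_pos hlowmid, S19.ft_p3]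
        · simp only [lrTest, R4]
          rw [if_neg (lt_irrefl _), if_neg (lt_irrefl _), S19.ft_p4]
        · simp only [lrTest, R5]
          rw [if_neg (lt_irrefl _), if_neg (lt_irrefl _), S19.ft_p5]
      have hαx : α * (1 + 2*φ + 2*φ^2 + φ^3)
          = 1*φ + γv*(1 + φ + φ^2 + φ^3) + 0*φ^2 := by
        rw [hγdef]; field_simp; try ring
      obtain ⟨hSE, hMP⟩ := S19.core φ α (2*φ/(1+φ^2)) γv 1 γv 0 hφ0 hφ1
        hk le_rfl le_rfl hγ0 hγ1 hval hαx
      exact ⟨2*φ/(1+φ^2), γv, hk, hγ0, hγ1, hSE, hMP⟩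
    · -- large α
      push_neg at c2
      set γv := (α * (1 + 2*φ + 2*φ^2 + φ^3) - φ - (1 + φ + φ^2 + φ^3)) / φ^2 with hγdef
      have hγ0 : 0 ≤ γv := div_nonneg (by linarith) h2p.le
      have hαZ : α * (1 + 2*φ + 2*φ^2 + φ^3) < 1 + 2*φ + 2*φ^2 + φ^3 := by
        have := mul_lt_mul_of_pos_right hα1 hZpos
        linarith
      have hγ1 : γv ≤ 1 := (div_le_one h2p).mpr (by linarith)
      have hval : ∀ V, lrTest (mallows1 φ) S19.Lam S19.p0 φ γv V = S19.ft 1 1 γv V := by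
        intro V
        have hm : V ∈ ({S19.p0, S19.p1, S19.p2, S19.p3, S19.p4, S19.p5} :
            Finset (Ranking 3)) := by rw [← S19.enum]; exact Finset.mem_univ _
        fin_cases hm
        · simp only [lrTest, R0]
          rw [if_pos hlow0, S19.ft_p0]
        · simp only [lrTest, R1]
          rw [if_pos hlowmid, S19.ft_p1]
        · simp only [lrTest, R2]
          rw [if_pos hlowmid, S19.ft_p2]
        · simp only [lrTest, R3]
          rw [if_neg (lt_irrefl _), if_neg (lt_irrefl _), S19.ft_p3]
        · simp only [lrTest, R4]
          rw [if_pos hlowmid, S19.ft_p4]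
        · simp only [lrTest, R5]
          rw [if_pos hlowmid, S19.ft_p5]
      have hαx : α * (1 + 2*φ + 2*φ^2 + φ^3)
          = 1*φ + 1*(1 + φ + φ^2 + φ^3) + γv*φ^2 := by
        rw [hγdef]; field_simp; try ring
      obtain ⟨hSE, hMP⟩ := S19.core φ α φ γv 1 1 γv hφ0 hφ1
        hφ0.le le_rfl hγ0 hγ1 le_rfl hval hαx
      exact ⟨φ, γv, hφ0.le, hγ0, hγ1, hSE, hMP⟩


end Voting
end
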